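/- arXiv:1502.07777 — 3 statements merged into one kernel-verified Lean document; each statement's English description precedes it below -/
import Mathlib

section
/- Let (f_n)_{n≥1} and f be nonincreasing functions from (0,∞) to [0,∞) that are Lebesgue integrable on every compact subinterval [c,d] ⊂ (0,∞), and suppose that ∫_c^d f_n(x) dx → ∫_c^d f(x) dx as n → ∞ for all 0 < c < d. If f is continuous at a point T > 0, then f_n(T) → f(T) as n → ∞. -/
open MeasureTheory Filter Topology

/-- **Analytic lemma on convergence of nonincreasing functions.**
If `(fₙ)` and `f` are nonincreasing, nonnegative functions on `(0,∞)`, integrable on every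
compact subinterval of `(0,∞)`, whose integrals over every compact subinterval converge,
and `f` is continuous at a point `T > 0`, then `fₙ(T) → f(T)`. -/
theorem antitone_pointwise_of_integral_tendsto (f : ℕ → ℝ → ℝ) (g : ℝ → ℝ)
    (hf_anti : ∀ n, AntitoneOn (f n) (Set.Ioi 0))
    (hf_nonneg : ∀ n, ∀ x ∈ Set.Ioi (0 : ℝ), 0 ≤ f n x)
    (hg_anti : AntitoneOn g (Set.Ioi 0))
    (hg_nonneg : ∀ x ∈ Set.Ioi (0 : ℝ), 0 ≤ g x)
    (hf_int : ∀ n, ∀ c d : ℝ, 0 < c → c < d → IntegrableOn (f n) (Set.Icc c d))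
    (hg_int : ∀ c d : ℝ, 0 < c → c < d → IntegrableOn g (Set.Icc c d))
    (h_tendsto : ∀ c d : ℝ, 0 < c → c < d →
      Tendsto (fun n => ∫ x in c..d, f n x) atTop (𝓝 (∫ x in c..d, g x)))
    (T : ℝ) (hT : 0 < T) (hg_cont : ContinuousAt g T) :
    Tendsto (fun n => f n T) atTop (𝓝 (g T)) := by
  have key : ∀ (h : ℝ → ℝ), AntitoneOn h (Set.Ioi 0) →
      (∀ c d : ℝ, 0 < c → c < d → IntegrableOn h (Set.Icc c d)) →
      ∀ a b : ℝ, 0 < a → a < b →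
      ((b - a) * h b ≤ ∫ x in a..b, h x) ∧ ((∫ x in a..b, h x) ≤ (b - a) * h a) := by
    intro h hanti hint a b ha hab
    have hii : IntervalIntegrable h volume a b :=
      (show IntegrableOn h (Set.uIcc a b) volume by
        rw [Set.uIcc_of_le hab.le]; exact hint a b ha hab).intervalIntegrable
    constructor
    · have hu : (∫ x in a..b, h b) ≤ ∫ x in a..b, h x :=
        intervalIntegral.integral_mono_on hab.le intervalIntegrable_const hii
          (fun x hx => hanti (Set.mem_Ioi.mpr (lt_of_lt_of_le ha hx.1))
            (Set.mem_Ioi.mpr (ha.trans hab)) hx.2)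
      simpa using hu
    · have hu : (∫ x in a..b, h x) ≤ ∫ x in a..b, h a :=
        intervalIntegral.integral_mono_on hab.le hii intervalIntegrable_const
          (fun x hx => hanti (Set.mem_Ioi.mpr ha)
            (Set.mem_Ioi.mpr (lt_of_lt_of_le ha hx.1)) hx.1)
      simpa using hu
  rw [Metric.tendsto_atTop]
  intro ε hε
  obtain ⟨δ, hδpos, hδ⟩ := Metric.continuousAt_iff.mp hg_cont (ε/4) (by linarith)
  set η := min (δ/2) (T/2) with hηdef
  have hηpos : 0 < η := lt_min (by linarith) (by linarith)
  have hηδ : η < δ := (min_le_left _ _).trans_lt (by linarith)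
  have hηT : η < T := (min_le_right _ _).trans_lt (by linarith)
  have h1 := h_tendsto (T - η) T (by linarith) (by linarith)
  have h2 := h_tendsto T (T + η) hT (by linarith)
  rw [Metric.tendsto_atTop] at h1 h2
  obtain ⟨N1, hN1⟩ := h1 (η * (ε/4)) (by positivity)
  obtain ⟨N2, hN2⟩ := h2 (η * (ε/4)) (by positivity)
  refine ⟨max N1 N2, fun n hn => ?_⟩
  have hn1 := hN1 n (le_of_max_le_left hn)
  have hn2 := hN2 n (le_of_max_le_right hn)
  rw [Real.dist_eq] at hn1 hn2 ⊢
  have kf1 := key (f n) (hf_anti n) (hf_int n) (T - η) T (by linarith) (by linarith)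
  have kf2 := key (f n) (hf_anti n) (hf_int n) T (T + η) hT (by linarith)
  have kg1 := key g hg_anti hg_int (T - η) T (by linarith) (by linarith)
  have kg2 := key g hg_anti hg_int T (T + η) hT (by linarith)
  rw [show T - (T - η) = η from by ring] at kf1 kg1
  rw [show T + η - T = η from by ring] at kf2 kg2
  have hc1 : |g (T - η) - g T| < ε/4 := by
    have hd : dist (T - η) T < δ := by
      rw [Real.dist_eq, show T - η - T = -η from by ring, abs_neg, abs_of_pos hηpos]
      exact hηδ
    simpa [Real.dist_eq] using hδ hd
  have hc2 : |g (T + η) - g T| < ε/4 := by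
    have hd : dist (T + η) T < δ := by
      rw [Real.dist_eq, show T + η - T = η from by ring, abs_of_pos hηpos]
      exact hηδ
    simpa [Real.dist_eq] using hδ hd
  obtain ⟨hn1a, hn1b⟩ := abs_lt.mp hn1
  obtain ⟨hn2a, hn2b⟩ := abs_lt.mp hn2
  obtain ⟨hc1a, hc1b⟩ := abs_lt.mp hc1
  obtain ⟨hc2a, hc2b⟩ := abs_lt.mp hc2
  -- upper bound: η * f n T ≤ ∫_{T-η}^T f n < ∫ g + ηε/4 ≤ η g(T-η) + ηε/4 < η (g T + ε/2)
  have hup : f n T ≤ g T + ε/2 := by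
    nlinarith [kf1.1, kg1.2, hn1b, hc1b, hηpos]
  have hlo : g T - ε/2 ≤ f n T := by
    nlinarith [kf2.2, kg2.1, hn2a, hc2a, hηpos]
  rw [abs_lt]
  constructor <;> linarith
end

section
/- Let V be a nonnegative random variable on a probability space (Ω, F, P) and let C ≥ 0 be such that lim_{ε→0+} P(V ≤ ε)/ε = C. Then lim_{ε→0+} ε^{−2} · (4/π) Σ_{k=1}^∞ ((−1)^{k−1}/(2k−1)) E[ exp( −(2k−1)² π² V / (8 ε²) ) ] = (32/π³) · C · Σ_{k=1}^∞ (−1)^{k−1}/(2k−1)³. (Both alternating series converge, the first one for every fixed ε > 0.) -/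
open MeasureTheory Filter Topology Real Set
open scoped ENNReal

namespace SmallBallAux

section
variable {Ω : Type*} [MeasurableSpace Ω] (P : Measure Ω) [IsProbabilityMeasure P]
  (V : Ω → ℝ)

noncomputable def F (t : ℝ) : ℝ := (P {ω | V ω ≤ t}).toReal

lemma F_mono : Monotone (F P V) := fun s t hst =>
  ENNReal.toReal_le_toReal (measure_ne_top _ _) (measure_ne_top _ _) |>.mpr
    (measure_mono fun ω (h : V ω ≤ s) => h.trans hst)

lemma F_meas : Measurable (F P V) := (F_mono P V).measurable

lemma F_nonneg (t : ℝ) : 0 ≤ F P V t := ENNReal.toReal_nonneg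

lemma F_le_one (t : ℝ) : F P V t ≤ 1 := by
  have := measure_mono (μ := P) (subset_univ {ω | V ω ≤ t})
  simpa [F, measure_univ] using ENNReal.toReal_le_toReal (measure_ne_top _ _) (by simp) |>.mpr this

lemma integral_Ici_exp {a : ℝ} (ha : 0 < a) (v : ℝ) :
    ∫ t in Ici v, a * exp (-(a * t)) = exp (-(a * v)) := by
  rw [MeasureTheory.integral_Ici_eq_integral_Ioi, integral_const_mul]
  have : (∫ t in Ioi v, exp (-(a * t))) = a⁻¹ • ∫ x in Ioi (a * v), exp (-x) := by
    simpa using integral_comp_mul_left_Ioi (fun x => exp (-x)) v ha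
  rw [this, integral_exp_neg_Ioi, smul_eq_mul]
  field_simp

lemma integrableOn_Ici_exp {a : ℝ} (ha : 0 < a) (v : ℝ) :
    IntegrableOn (fun t => a * exp (-(a * t))) (Ici v) := by
  rw [integrableOn_Ici_iff_integrableOn_Ioi]
  exact ((exp_neg_integrableOn_Ioi v ha).congr_fun (fun t _ => by ring_nf) measurableSet_Ioi).const_mul a


lemma integrableOn_texp : IntegrableOn (fun t : ℝ => t * exp (-t)) (Ioi 0) := by
  have := Real.GammaIntegral_convergent (s := 2) (by norm_num)
  refine this.congr_fun (fun t ht => ?_) measurableSet_Ioi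
  rw [show (2:ℝ) - 1 = 1 by norm_num]; simp only [Real.rpow_one]
  ring

lemma integral_texp : ∫ t in Ioi (0:ℝ), t * exp (-t) = 1 := by
  have h := Real.Gamma_eq_integral (s := 2) (by norm_num)
  rw [Real.Gamma_two] at h
  rw [h]
  refine setIntegral_congr_fun measurableSet_Ioi (fun t ht => ?_)
  rw [show (2:ℝ) - 1 = 1 by norm_num, Real.rpow_one]
  ring

lemma integral_mul_exp_Ioi {a : ℝ} (ha : 0 < a) :
    ∫ t in Ioi (0:ℝ), a * exp (-(a * t)) * t = 1 / a := by
  have h := integral_comp_mul_left_Ioi (fun s => s * exp (-s)) 0 ha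
  simp only [mul_zero, smul_eq_mul, integral_texp, mul_one] at h
  calc ∫ t in Ioi (0:ℝ), a * exp (-(a * t)) * t
      = ∫ t in Ioi (0:ℝ), a * t * exp (-(a * t)) := by
        refine setIntegral_congr_fun measurableSet_Ioi (fun t _ => by ring)
    _ = a⁻¹ := h
    _ = 1 / a := (one_div a).symm

lemma integrableOn_mul_exp_Ioi {a : ℝ} (ha : 0 < a) :
    IntegrableOn (fun t : ℝ => a * exp (-(a * t)) * t) (Ioi 0) := by
  have h := (integrableOn_Ioi_comp_mul_left_iff (fun s : ℝ => s * exp (-s)) 0 ha).mpr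
    (by simpa using integrableOn_texp)
  refine IntegrableOn.congr_fun h (fun t _ => by ring) measurableSet_Ioi


variable (hVmeas : Measurable V) (hVnonneg : ∀ ω, 0 ≤ V ω)

include hVmeas hVnonneg in
lemma laplace_eq {a : ℝ} (ha : 0 < a) :
    ∫ ω, exp (-(a * V ω)) ∂P = ∫ t in Ioi (0:ℝ), a * exp (-(a * t)) * F P V t := by
  -- ennreal kernels
  set g : ℝ → ℝ≥0∞ := fun t => ENNReal.ofReal (a * exp (-(a * t))) with hg
  have hgmeas : Measurable g := by
    exact (measurable_const.mul ((measurable_id.const_mul a).neg.exp)).ennreal_ofReal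
  have hSmeas : MeasurableSet {p : Ω × ℝ | V p.1 ≤ p.2} :=
    measurableSet_le (hVmeas.comp measurable_fst) measurable_snd
  set f : Ω → ℝ → ℝ≥0∞ := fun ω t => {p : Ω × ℝ | V p.1 ≤ p.2}.indicator
    (fun p => g p.2) (ω, t) with hf
  have hfmeas : Measurable (Function.uncurry f) := by
    have : Function.uncurry f = {p : Ω × ℝ | V p.1 ≤ p.2}.indicator (fun p => g p.2) := rfl
    rw [this]
    exact (hgmeas.comp measurable_snd).indicator hSmeas
  -- step 1 : LHS as lintegral
  have h1 : ∫ ω, exp (-(a * V ω)) ∂P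
      = (∫⁻ ω, ENNReal.ofReal (exp (-(a * V ω))) ∂P).toReal := by
    rw [integral_eq_lintegral_of_nonneg_ae (f := fun ω => exp (-(a * V ω))) (Filter.Eventually.of_forall fun ω => (exp_pos _).le)
      ((hVmeas.const_mul a).neg.exp.aestronglyMeasurable)]
  -- step 2 : pointwise identity
  have h2 : ∀ ω, ENNReal.ofReal (exp (-(a * V ω))) = ∫⁻ t, f ω t := by
    intro ω
    have hind : ∀ t, f ω t = (Ici (V ω)).indicator g t := by
      intro t
      simp only [hf, Set.indicator_apply, Set.mem_setOf_eq, Set.mem_Ici]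
    simp only [hind]
    rw [lintegral_indicator measurableSet_Ici]
    rw [← integral_Ici_exp ha (V ω),
      ← ofReal_integral_eq_lintegral_ofReal (integrableOn_Ici_exp ha (V ω))
        (Filter.Eventually.of_forall fun t => by positivity)]
  -- step 3 : swap
  have h3 : ∫⁻ ω, ∫⁻ t, f ω t ∂(volume) ∂P = ∫⁻ t, ∫⁻ ω, f ω t ∂P ∂(volume) :=
    lintegral_lintegral_swap hfmeas.aemeasurable
  -- step 4 : inner integral over ω
  have h4 : ∀ t : ℝ, ∫⁻ ω, f ω t ∂P = g t * P {ω | V ω ≤ t} := by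
    intro t
    have hind : ∀ ω, f ω t = {ω : Ω | V ω ≤ t}.indicator (fun _ => g t) ω := by
      intro ω
      simp only [hf, Set.indicator_apply, Set.mem_setOf_eq]
    simp only [hind]
    rw [lintegral_indicator_const (measurableSet_le hVmeas measurable_const)]
  -- step 5 : kill t ≤ 0
  have h5 : ∫⁻ t, g t * P {ω | V ω ≤ t} ∂(volume)
      = ∫⁻ t in Ioi (0:ℝ), g t * P {ω | V ω ≤ t} ∂(volume) := by
    rw [← lintegral_add_compl (fun t => g t * P {ω | V ω ≤ t}) (measurableSet_Ioi (a := (0:ℝ)))]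
    have hz : ∫⁻ t in (Ioi (0:ℝ))ᶜ, g t * P {ω | V ω ≤ t} ∂(volume) = 0 := by
      rw [compl_Ioi]
      rw [Measure.restrict_congr_set Iio_ae_eq_Iic.symm]
      have hmono : Monotone (fun t : ℝ => P {ω | V ω ≤ t}) := fun s t hst =>
        measure_mono (fun ω (h : V ω ≤ s) => h.trans hst)
      rw [lintegral_eq_zero_iff (f := fun t => g t * P {ω | V ω ≤ t}) (hgmeas.mul hmono.measurable)]
      rw [Filter.EventuallyEq, ae_restrict_iff' measurableSet_Iio]
      refine Filter.Eventually.of_forall fun t ht => ?_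
      have : {ω | V ω ≤ t} = ∅ := by
        ext ω; simp only [Set.mem_setOf_eq, Set.mem_empty_iff_false, iff_false, not_le]
        exact lt_of_lt_of_le ht (hVnonneg ω)
      simp [this]
    rw [hz, add_zero]
  -- step 6 : RHS as lintegral
  have h6 : ∫ t in Ioi (0:ℝ), a * exp (-(a * t)) * F P V t
      = (∫⁻ t in Ioi (0:ℝ), g t * P {ω | V ω ≤ t} ∂(volume)).toReal := by
    have hmeasRHS : Measurable fun t : ℝ => a * exp (-(a * t)) * F P V t :=
      (((measurable_id'.const_mul a).neg.exp).const_mul a).mul (F_meas P V)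
    rw [integral_eq_lintegral_of_nonneg_ae
      (Filter.Eventually.of_forall fun t => by
        have := F_nonneg P V t; positivity)
      hmeasRHS.aestronglyMeasurable]
    congr 1
    refine lintegral_congr fun t => ?_
    rw [ENNReal.ofReal_mul (by positivity)]
    congr 1
    exact ENNReal.ofReal_toReal (measure_ne_top _ _)
  rw [h1, h6]
  congr 1
  calc ∫⁻ ω, ENNReal.ofReal (exp (-(a * V ω))) ∂P
      = ∫⁻ ω, ∫⁻ t, f ω t ∂(volume) ∂P := lintegral_congr h2
    _ = ∫⁻ t, ∫⁻ ω, f ω t ∂P ∂(volume) := h3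
    _ = ∫⁻ t, g t * P {ω | V ω ≤ t} ∂(volume) := lintegral_congr h4
    _ = _ := h5


include hVmeas hVnonneg in
lemma laplace_le {M t₀ a : ℝ} (ht₀ : 0 < t₀) (hM : 0 ≤ M)
    (hF : ∀ t ∈ Ioc (0:ℝ) t₀, F P V t ≤ M * t) (ha : 0 < a) :
    ∫ ω, exp (-(a * V ω)) ∂P ≤ M / a + exp (-(a * t₀)) := by
  rw [laplace_eq P V hVmeas hVnonneg ha]
  have hexp_int : IntegrableOn (fun t : ℝ => a * exp (-(a * t))) (Ioi 0) :=
    (integrableOn_Ici_exp ha 0).mono_set Ioi_subset_Ici_self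
  have hφmeas : Measurable fun t : ℝ => a * exp (-(a * t)) * F P V t :=
    (((measurable_id'.const_mul a).neg.exp).const_mul a).mul (F_meas P V)
  have hφint : IntegrableOn (fun t : ℝ => a * exp (-(a * t)) * F P V t) (Ioi 0) := by
    refine Integrable.mono hexp_int hφmeas.aestronglyMeasurable ?_
    refine Filter.Eventually.of_forall fun t => ?_
    have h1 := F_nonneg P V t; have h2 := F_le_one P V t
    rw [Real.norm_eq_abs, Real.norm_eq_abs, abs_of_nonneg (by positivity),
      abs_of_nonneg (by positivity)]
    nlinarith [mul_pos ha (exp_pos (-(a*t)))]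
  have hsub1 : Ioc (0:ℝ) t₀ ⊆ Ioi 0 := Ioc_subset_Ioi_self
  have hsub2 : Ioi t₀ ⊆ Ioi (0:ℝ) := Ioi_subset_Ioi ht₀.le
  have hsplit : Ioi (0:ℝ) = Ioc 0 t₀ ∪ Ioi t₀ := (Ioc_union_Ioi_eq_Ioi ht₀.le).symm
  rw [hsplit, setIntegral_union (Ioc_disjoint_Ioi le_rfl) measurableSet_Ioi
    (hφint.mono_set hsub1) (hφint.mono_set hsub2)]
  have hb1 : ∫ t in Ioc (0:ℝ) t₀, a * exp (-(a * t)) * F P V t ≤ M / a := by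
    calc ∫ t in Ioc (0:ℝ) t₀, a * exp (-(a * t)) * F P V t
        ≤ ∫ t in Ioc (0:ℝ) t₀, M * (a * exp (-(a * t)) * t) := by
          refine setIntegral_mono_on (hφint.mono_set hsub1)
            (IntegrableOn.mono_set (Integrable.const_mul (integrableOn_mul_exp_Ioi ha) M) hsub1)
            measurableSet_Ioc (fun t ht => ?_)
          have h3 := hF t ht
          nlinarith [mul_pos ha (exp_pos (-(a*t))), ht.1, F_nonneg P V t]
      _ ≤ ∫ t in Ioi (0:ℝ), M * (a * exp (-(a * t)) * t) := by
          refine setIntegral_mono_set (Integrable.const_mul (integrableOn_mul_exp_Ioi ha) M)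
            ?_ (HasSubset.Subset.eventuallyLE hsub1)
          rw [EventuallyLE, ae_restrict_iff' measurableSet_Ioi]
          refine Filter.Eventually.of_forall fun t ht => ?_
          have : (0:ℝ) < t := ht
          positivity
      _ = M * (1/a) := by rw [integral_const_mul, integral_mul_exp_Ioi ha]
      _ = M / a := by ring
  have hb2 : ∫ t in Ioi t₀, a * exp (-(a * t)) * F P V t ≤ exp (-(a * t₀)) := by
    calc ∫ t in Ioi t₀, a * exp (-(a * t)) * F P V t
        ≤ ∫ t in Ioi t₀, a * exp (-(a * t)) := by
          refine setIntegral_mono_on (hφint.mono_set hsub2)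
            ((integrableOn_Ici_exp ha t₀).mono_set Ioi_subset_Ici_self) measurableSet_Ioi
            (fun t _ => ?_)
          have h1 := F_le_one P V t; have h2 := F_nonneg P V t
          nlinarith [mul_pos ha (exp_pos (-(a*t)))]
      _ = exp (-(a * t₀)) := by rw [← integral_Ici_exp ha t₀, integral_Ici_eq_integral_Ioi]
  linarith


variable {C : ℝ} (hC : 0 ≤ C)
variable (hV : Tendsto (fun ε : ℝ => F P V ε / ε) (𝓝[>] 0) (𝓝 C))

include hV hC in
lemma exists_linear_bound : ∃ t₀ > (0:ℝ), ∀ t ∈ Ioc (0:ℝ) t₀, F P V t ≤ (C + 1) * t := by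
  have h := hV.eventually (eventually_lt_nhds (lt_add_one C))
  rw [eventually_nhdsWithin_iff, Metric.eventually_nhds_iff] at h
  obtain ⟨δ, hδ, hh⟩ := h
  refine ⟨δ / 2, by positivity, fun t ht => ?_⟩
  have h1 : dist t 0 < δ := by
    rw [Real.dist_eq, sub_zero, abs_of_pos ht.1]
    linarith [ht.2]
  have h2 := hh h1 ht.1
  have := (div_le_iff₀ ht.1).mp h2.le
  linarith [this]

include hVmeas hVnonneg hC hV in
lemma tendsto_laplace :
    Tendsto (fun a : ℝ => a * ∫ ω, exp (-(a * V ω)) ∂P) atTop (𝓝 C) := by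
  obtain ⟨t₀, ht₀, hFb⟩ := exists_linear_bound P V hC hV
  set K : ℝ := (C + 1) + 1 / t₀ with hK
  have hKpos : 0 < K := by positivity
  -- uniform bound : a * F(s/a) ≤ K * s for s, a > 0
  have hKb : ∀ s : ℝ, 0 < s → ∀ a : ℝ, 0 < a → a * F P V (s / a) ≤ K * s := by
    intro s hs a ha
    by_cases h : s / a ≤ t₀
    · have h1 := hFb (s / a) ⟨by positivity, h⟩
      have h2 : a * F P V (s / a) ≤ a * ((C + 1) * (s / a)) :=
        mul_le_mul_of_nonneg_left h1 ha.le
      have h3 : a * ((C + 1) * (s / a)) = (C + 1) * s := by field_simp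
      have h4 : 0 ≤ (1 / t₀) * s := by positivity
      rw [hK]; nlinarith
    · push_neg at h
      have h2 : a * F P V (s / a) ≤ a := by
        simpa using mul_le_mul_of_nonneg_left (F_le_one P V (s / a)) ha.le
      have h3 : 0 ≤ (C + 1) * s := by positivity
      have h1 : a ≤ 1 / t₀ * s := by
        rw [lt_div_iff₀ ha] at h
        rw [div_mul_eq_mul_div, le_div_iff₀ ht₀]
        nlinarith
      rw [hK]
      nlinarith
  -- the rescaled integrand
  set H : ℝ → ℝ → ℝ := fun a s => a * exp (-s) * F P V (s / a) with hH
  -- limit via DCT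
  have hlim : Tendsto (fun a : ℝ => ∫ s in Ioi (0:ℝ), H a s) atTop
      (𝓝 (∫ s in Ioi (0:ℝ), C * (s * exp (-s)))) := by
    refine tendsto_integral_filter_of_dominated_convergence
      (fun s => K * (s * exp (-s))) ?_ ?_ ?_ ?_
    · refine Filter.Eventually.of_forall fun a => ?_
      exact ((((measurable_const.mul (measurable_id'.neg.exp))).mul
        ((F_meas P V).comp (measurable_id'.div_const a))).aestronglyMeasurable)
    · filter_upwards [eventually_gt_atTop (0:ℝ)] with a ha
      rw [ae_restrict_iff' measurableSet_Ioi]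
      refine Filter.Eventually.of_forall fun s hs => ?_
      have hs' : (0:ℝ) < s := hs
      have h1 := hKb s hs' a ha
      have h2 := F_nonneg P V (s / a)
      rw [Real.norm_eq_abs, abs_of_nonneg (by positivity)]
      calc a * exp (-s) * F P V (s / a) = (a * F P V (s / a)) * exp (-s) := by ring
        _ ≤ (K * s) * exp (-s) := mul_le_mul_of_nonneg_right h1 (exp_pos _).le
        _ = K * (s * exp (-s)) := by ring
    · exact integrableOn_texp.const_mul K
    · rw [ae_restrict_iff' measurableSet_Ioi]
      refine Filter.Eventually.of_forall fun s hs => ?_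
      have hs' : (0:ℝ) < s := hs
      have h1 : Tendsto (fun a : ℝ => s / a) atTop (𝓝[>] 0) := by
        rw [tendsto_nhdsWithin_iff]
        constructor
        · simpa [div_eq_mul_inv] using tendsto_inv_atTop_zero.const_mul s
        · filter_upwards [eventually_gt_atTop (0:ℝ)] with a ha
          exact div_pos hs' ha
      have h2 : Tendsto (fun a : ℝ => exp (-s) * s * (F P V (s / a) / (s / a)))
          atTop (𝓝 (exp (-s) * s * C)) := (hV.comp h1).const_mul _
      have h3 : (fun a : ℝ => exp (-s) * s * (F P V (s / a) / (s / a)))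
          =ᶠ[atTop] fun a => H a s := by
        filter_upwards [eventually_gt_atTop (0:ℝ)] with a ha
        rw [hH]
        field_simp
      have h4 := h2.congr' h3
      have : exp (-s) * s * C = C * (s * exp (-s)) := by ring
      rwa [this] at h4
  have hval : ∫ s in Ioi (0:ℝ), C * (s * exp (-s)) = C := by
    rw [integral_const_mul, integral_texp, mul_one]
  rw [hval] at hlim
  refine hlim.congr' ?_
  filter_upwards [eventually_gt_atTop (0:ℝ)] with a ha
  have h0 := integral_comp_mul_left_Ioi (H a) 0 ha
  simp only [mul_zero, smul_eq_mul] at h0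
  have h1 : ∀ t : ℝ, H a (a * t) = a * exp (-(a * t)) * F P V t := by
    intro t
    show a * exp (-(a * t)) * F P V (a * t / a) = _
    rw [mul_div_cancel_left₀ _ ha.ne']
  rw [laplace_eq P V hVmeas hVnonneg ha]
  calc ∫ s in Ioi (0:ℝ), H a s
      = a * (a⁻¹ * ∫ s in Ioi (0:ℝ), H a s) := by field_simp
    _ = a * ∫ t in Ioi (0:ℝ), H a (a * t) := by rw [h0]
    _ = a * ∫ t in Ioi (0:ℝ), a * exp (-(a * t)) * F P V t := by
        congr 1
        exact setIntegral_congr_fun measurableSet_Ioi fun t _ => h1 t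


end

end SmallBallAux
namespace SmallBallAux

lemma summable_cube : Summable (fun k : ℕ => 1 / (2 * (k : ℝ) + 1) ^ 3) := by
  have h0 : Summable (fun n : ℕ => 1 / ((n : ℝ) + 1) ^ 2) := by
    have h1 : Summable (fun n : ℕ => 1 / ((n : ℝ)) ^ 2) :=
      summable_one_div_nat_pow.mpr one_lt_two
    have h2 := (_root_.summable_nat_add_iff (f := fun n : ℕ => 1 / (n : ℝ) ^ 2) 1).mpr h1
    refine h2.congr fun n => ?_
    push_cast
    ring_nf
  refine Summable.of_nonneg_of_le (fun k => by positivity) (fun k => ?_) h0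
  have h1 : (0:ℝ) < (k : ℝ) + 1 := by positivity
  have hk0 : (0:ℝ) ≤ (k : ℝ) := Nat.cast_nonneg k
  have hb : (1:ℝ) ≤ 2 * (k : ℝ) + 1 := by linarith
  have h2 : ((k : ℝ) + 1) ^ 2 ≤ (2 * (k : ℝ) + 1) ^ 3 := by
    calc ((k : ℝ) + 1) ^ 2 ≤ (2 * (k : ℝ) + 1) ^ 2 := by nlinarith
      _ ≤ (2 * (k : ℝ) + 1) ^ 3 := pow_le_pow_right₀ hb (by norm_num)
  exact one_div_le_one_div_of_le (by positivity) h2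

end SmallBallAux

open SmallBallAux in
/-- **Analytic core of the small ball asymptotics for time-changed Brownian motion.**
If `V ≥ 0` satisfies `P(V ≤ ε)/ε → C` as `ε → 0+`, then both alternating series below
converge (the first one for every fixed `ε > 0`) and
`ε^{-2} (4/π) Σₖ ((−1)^{k−1}/(2k−1)) E[exp(−(2k−1)²π²V/(8ε²))]`
converges to `(32/π³) C Σₖ (−1)^{k−1}/(2k−1)³`. -/
theorem smallBall_series_asymptotics {Ω : Type*} [MeasurableSpace Ω] (P : Measure Ω)
    [IsProbabilityMeasure P] (V : Ω → ℝ) (hVmeas : Measurable V) (hVnonneg : ∀ ω, 0 ≤ V ω)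
    (C : ℝ) (hC : 0 ≤ C)
    (hV : Tendsto (fun ε : ℝ => (P {ω | V ω ≤ ε}).toReal / ε) (𝓝[>] 0) (𝓝 C)) :
    (∀ ε : ℝ, 0 < ε → Summable (fun k : ℕ =>
        ((-1 : ℝ) ^ k / (2 * (k : ℝ) + 1)) *
          ∫ ω, Real.exp (-((2 * (k : ℝ) + 1) ^ 2 * π ^ 2 * V ω / (8 * ε ^ 2))) ∂P)) ∧
      Summable (fun k : ℕ => ((-1 : ℝ) ^ k / (2 * (k : ℝ) + 1) ^ 3)) ∧
      Tendsto
        (fun ε : ℝ =>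
          (1 / ε ^ 2) * ((4 / π) * ∑' k : ℕ,
            ((-1 : ℝ) ^ k / (2 * (k : ℝ) + 1)) *
              ∫ ω, Real.exp (-((2 * (k : ℝ) + 1) ^ 2 * π ^ 2 * V ω / (8 * ε ^ 2))) ∂P))
        (𝓝[>] 0)
        (𝓝 ((32 / π ^ 3) * C * ∑' k : ℕ, ((-1 : ℝ) ^ k / (2 * (k : ℝ) + 1) ^ 3))) := by
  have hV' : Tendsto (fun ε : ℝ => F P V ε / ε) (𝓝[>] 0) (𝓝 C) := hV
  have hπ := Real.pi_pos
  obtain ⟨t₀, ht₀, hFb⟩ := exists_linear_bound P V hC hV'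
  set K : ℝ := (C + 1) + 1 / t₀ with hKdef
  have hKpos : 0 < K := by positivity
  -- clean exponent
  have hIeq : ∀ (ε : ℝ) (k : ℕ),
      (∫ ω, Real.exp (-((2 * (k:ℝ) + 1) ^ 2 * π ^ 2 * V ω / (8 * ε ^ 2))) ∂P)
        = ∫ ω, Real.exp (-(((2 * (k:ℝ) + 1) ^ 2 * π ^ 2 / (8 * ε ^ 2)) * V ω)) ∂P := by
    intro ε k
    congr 1
    funext ω
    congr 1
    ring
  have hapos : ∀ (ε : ℝ), 0 < ε → ∀ k : ℕ, 0 < (2 * (k:ℝ) + 1) ^ 2 * π ^ 2 / (8 * ε ^ 2) := by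
    intro ε hε k
    have h2k : (0:ℝ) < 2 * (k:ℝ) + 1 := by positivity
    positivity
  have hInonneg : ∀ a : ℝ, 0 ≤ ∫ ω, Real.exp (-(a * V ω)) ∂P :=
    fun a => integral_nonneg fun ω => (exp_pos _).le
  have hIle : ∀ a : ℝ, 0 < a → ∫ ω, Real.exp (-(a * V ω)) ∂P ≤ K / a := by
    intro a ha
    have h1 := laplace_le P V hVmeas hVnonneg ht₀ (by linarith) hFb ha
    have h2 : Real.exp (-(a * t₀)) ≤ 1 / (a * t₀) := by
      rw [exp_neg, one_div]
      refine inv_anti₀ (by positivity) ?_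
      calc a * t₀ ≤ a * t₀ + 1 := by linarith
        _ ≤ Real.exp (a * t₀) := Real.add_one_le_exp _
    have h3 : (C + 1) / a + 1 / (a * t₀) = K / a := by
      rw [hKdef]; field_simp
    linarith
  -- key numeric bound for the k-th term, for ε > 0
  have hterm_bound : ∀ (ε : ℝ), 0 < ε → ∀ k : ℕ,
      (1 / (2 * (k:ℝ) + 1)) * (∫ ω, Real.exp (-((2 * (k:ℝ) + 1) ^ 2 * π ^ 2 * V ω / (8 * ε ^ 2))) ∂P)
        ≤ (8 * K / π ^ 2) * ε ^ 2 * (1 / (2 * (k:ℝ) + 1) ^ 3) := by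
    intro ε hε k
    have h2k : (0:ℝ) < 2 * (k:ℝ) + 1 := by positivity
    rw [hIeq ε k]
    have h3 := hIle _ (hapos ε hε k)
    have h4 : K / ((2 * (k:ℝ) + 1) ^ 2 * π ^ 2 / (8 * ε ^ 2))
        = (8 * K / π ^ 2) * ε ^ 2 * (1 / (2 * (k:ℝ) + 1) ^ 2) := by
      field_simp
    calc (1 / (2 * (k:ℝ) + 1)) * (∫ ω, Real.exp (-(((2 * (k:ℝ) + 1) ^ 2 * π ^ 2 / (8 * ε ^ 2)) * V ω)) ∂P)
        ≤ (1 / (2 * (k:ℝ) + 1)) * ((8 * K / π ^ 2) * ε ^ 2 * (1 / (2 * (k:ℝ) + 1) ^ 2)) := by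
          rw [← h4]
          exact mul_le_mul_of_nonneg_left h3 (by positivity)
      _ = (8 * K / π ^ 2) * ε ^ 2 * (1 / (2 * (k:ℝ) + 1) ^ 3) := by
          field_simp
  have habs : ∀ (ε : ℝ) (k : ℕ),
      |((-1 : ℝ) ^ k / (2 * (k:ℝ) + 1)) *
          ∫ ω, Real.exp (-((2 * (k:ℝ) + 1) ^ 2 * π ^ 2 * V ω / (8 * ε ^ 2))) ∂P|
        = (1 / (2 * (k:ℝ) + 1)) *
          ∫ ω, Real.exp (-((2 * (k:ℝ) + 1) ^ 2 * π ^ 2 * V ω / (8 * ε ^ 2))) ∂P := by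
    intro ε k
    have h2k : (0:ℝ) < 2 * (k:ℝ) + 1 := by positivity
    have h5 : (0:ℝ) ≤ ∫ ω, Real.exp (-((2 * (k:ℝ) + 1) ^ 2 * π ^ 2 * V ω / (8 * ε ^ 2))) ∂P :=
      integral_nonneg fun ω => (exp_pos _).le
    rw [abs_mul, abs_div, abs_pow, abs_neg, abs_one, one_pow, abs_of_pos h2k,
      abs_of_nonneg h5]
  -- conjunct 1
  have hsum1 : ∀ ε : ℝ, 0 < ε → Summable (fun k : ℕ =>
      ((-1 : ℝ) ^ k / (2 * (k : ℝ) + 1)) *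
        ∫ ω, Real.exp (-((2 * (k : ℝ) + 1) ^ 2 * π ^ 2 * V ω / (8 * ε ^ 2))) ∂P) := by
    intro ε hε
    refine Summable.of_abs ?_
    refine Summable.of_nonneg_of_le (fun k => abs_nonneg _) (fun k => ?_)
      (summable_cube.mul_left ((8 * K / π ^ 2) * ε ^ 2))
    rw [habs ε k]
    calc (1 / (2 * (k:ℝ) + 1)) * ∫ ω, Real.exp (-((2 * (k:ℝ) + 1) ^ 2 * π ^ 2 * V ω / (8 * ε ^ 2))) ∂P
        ≤ (8 * K / π ^ 2) * ε ^ 2 * (1 / (2 * (k:ℝ) + 1) ^ 3) := hterm_bound ε hε k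
      _ = (8 * K / π ^ 2) * ε ^ 2 * (1 / (2 * (k:ℝ) + 1) ^ 3) := rfl
  -- conjunct 2
  have hsum3 : Summable (fun k : ℕ => ((-1 : ℝ) ^ k / (2 * (k : ℝ) + 1) ^ 3)) := by
    refine Summable.of_abs (summable_cube.congr fun k => ?_)
    have h2k : (0:ℝ) < 2 * (k:ℝ) + 1 := by positivity
    rw [abs_div, abs_pow, abs_neg, abs_one, one_pow, abs_pow, abs_of_pos h2k]
  refine ⟨hsum1, hsum3, ?_⟩
  -- conjunct 3
  have hrw : ∀ ε : ℝ, (1 / ε ^ 2) * ((4 / π) * ∑' k : ℕ,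
      ((-1 : ℝ) ^ k / (2 * (k : ℝ) + 1)) *
        ∫ ω, Real.exp (-((2 * (k : ℝ) + 1) ^ 2 * π ^ 2 * V ω / (8 * ε ^ 2))) ∂P)
      = ∑' k : ℕ, (1 / ε ^ 2) * ((4 / π) * (((-1 : ℝ) ^ k / (2 * (k : ℝ) + 1)) *
        ∫ ω, Real.exp (-((2 * (k : ℝ) + 1) ^ 2 * π ^ 2 * V ω / (8 * ε ^ 2))) ∂P)) := by
    intro ε
    rw [tsum_mul_left, tsum_mul_left]
  -- per-k limits
  have hlimk : ∀ k : ℕ, Tendsto (fun ε : ℝ => (1 / ε ^ 2) * ((4 / π) *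
      (((-1 : ℝ) ^ k / (2 * (k : ℝ) + 1)) *
        ∫ ω, Real.exp (-((2 * (k : ℝ) + 1) ^ 2 * π ^ 2 * V ω / (8 * ε ^ 2))) ∂P)))
      (𝓝[>] 0) (𝓝 ((32 / π ^ 3 * C) * ((-1 : ℝ) ^ k / (2 * (k : ℝ) + 1) ^ 3))) := by
    intro k
    have h2k : (0:ℝ) < 2 * (k:ℝ) + 1 := by positivity
    set c : ℝ := (2 * (k:ℝ) + 1) ^ 2 * π ^ 2 / 8 with hc
    have hcpos : 0 < c := by positivity
    have hsq : Tendsto (fun ε : ℝ => ε ^ 2) (𝓝[>] (0:ℝ)) (𝓝[>] (0:ℝ)) := by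
      rw [tendsto_nhdsWithin_iff]
      constructor
      · exact (((continuous_pow 2).tendsto' (0:ℝ) 0 (by norm_num))).mono_left nhdsWithin_le_nhds
      · filter_upwards [self_mem_nhdsWithin] with x (hx : x ∈ Ioi (0:ℝ))
        exact pow_pos (show (0:ℝ) < x from hx) 2
    have hatop : Tendsto (fun ε : ℝ => c / ε ^ 2) (𝓝[>] (0:ℝ)) atTop := by
      have h1 : Tendsto (fun x : ℝ => c * x⁻¹) (𝓝[>] (0:ℝ)) atTop :=
        Tendsto.const_mul_atTop hcpos tendsto_inv_nhdsGT_zero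
      have h2 := h1.comp hsq
      refine h2.congr fun ε => ?_
      simp [div_eq_mul_inv]
    have hmain := (tendsto_laplace P V hVmeas hVnonneg hC hV').comp hatop
    set D : ℝ := (4 / π) * ((-1 : ℝ) ^ k / (2 * (k:ℝ) + 1)) * (1 / c) with hD
    have hconst := hmain.const_mul D
    have hval : D * C = (32 / π ^ 3 * C) * ((-1 : ℝ) ^ k / (2 * (k : ℝ) + 1) ^ 3) := by
      rw [hD, hc]
      field_simp
      ring
    rw [← hval]
    refine hconst.congr' ?_
    filter_upwards [self_mem_nhdsWithin] with ε (hε : ε ∈ Ioi (0:ℝ))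
    have hε' : (0:ℝ) < ε := hε
    have hIeq2 : (∫ ω, Real.exp (-((c / ε ^ 2) * V ω)) ∂P)
        = ∫ ω, Real.exp (-((2 * (k:ℝ) + 1) ^ 2 * π ^ 2 * V ω / (8 * ε ^ 2))) ∂P := by
      congr 1
      funext ω
      congr 1
      rw [hc]
      field_simp
    show D * ((fun a : ℝ => a * ∫ ω, Real.exp (-(a * V ω)) ∂P) ((c / ε ^ 2)))
        = _
    simp only
    rw [hIeq2, hD]
    field_simp
  -- dominated convergence for the series
  have hbound : ∀ᶠ ε in 𝓝[>] (0:ℝ), ∀ k : ℕ,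
      ‖(1 / ε ^ 2) * ((4 / π) * (((-1 : ℝ) ^ k / (2 * (k : ℝ) + 1)) *
        ∫ ω, Real.exp (-((2 * (k : ℝ) + 1) ^ 2 * π ^ 2 * V ω / (8 * ε ^ 2))) ∂P))‖
        ≤ (4 / π) * (8 * K / π ^ 2) * (1 / (2 * (k : ℝ) + 1) ^ 3) := by
    filter_upwards [self_mem_nhdsWithin] with ε (hε : ε ∈ Ioi (0:ℝ))
    intro k
    have hε' : (0:ℝ) < ε := hε
    have h2k : (0:ℝ) < 2 * (k:ℝ) + 1 := by positivity
    rw [Real.norm_eq_abs, abs_mul, abs_mul, habs ε k, abs_of_pos (by positivity : (0:ℝ) < 1 / ε ^ 2),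
      abs_of_pos (by positivity : (0:ℝ) < 4 / π)]
    have h6 := hterm_bound ε hε' k
    calc (1 / ε ^ 2) * ((4 / π) * ((1 / (2 * (k:ℝ) + 1)) *
          ∫ ω, Real.exp (-((2 * (k:ℝ) + 1) ^ 2 * π ^ 2 * V ω / (8 * ε ^ 2))) ∂P))
        ≤ (1 / ε ^ 2) * ((4 / π) * ((8 * K / π ^ 2) * ε ^ 2 * (1 / (2 * (k:ℝ) + 1) ^ 3))) := by
          refine mul_le_mul_of_nonneg_left (mul_le_mul_of_nonneg_left h6 (by positivity)) (by positivity)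
      _ = (4 / π) * (8 * K / π ^ 2) * (1 / (2 * (k : ℝ) + 1) ^ 3) := by
          field_simp
  have hsummable_bound : Summable (fun k : ℕ =>
      (4 / π) * (8 * K / π ^ 2) * (1 / (2 * (k : ℝ) + 1) ^ 3)) :=
    summable_cube.mul_left _
  have hL := tendsto_tsum_of_dominated_convergence hsummable_bound hlimk hbound
  rw [tsum_mul_left] at hL
  exact hL.congr fun ε => (hrw ε).symm
end

section
/- Let m ≥ 1 be an integer, let V_1, …, V_m be independent nonnegative random variables on a probability space (Ω, F, P), and let c_1, …, c_m > 0 and ν_1, …, ν_m > 0 be constants such that lim_{ε→0+} P(V_j ≤ ε)/ε = ν_j for each j = 1, …, m. Then lim_{ε→0+} ε^{−m} P( Σ_{j=1}^m c_j V_j ≤ ε ) = (1/m!) · ∏_{j=1}^m (ν_j / c_j). -/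
open MeasureTheory ProbabilityTheory Filter Topology

section Aux

/-- The map `ε ↦ ε * r` (with `r > 0`) sends `𝓝[>] 0` to `𝓝[>] 0`. -/
private lemma tendsto_mul_right_nhdsGT {r : ℝ} (hr : 0 < r) :
    Tendsto (fun ε : ℝ => ε * r) (𝓝[>] 0) (𝓝[>] 0) := by
  apply tendsto_nhdsWithin_of_tendsto_nhds_of_eventually_within
  · have h : Tendsto (fun ε : ℝ => ε * r) (𝓝 0) (𝓝 (0 * r)) :=
      (continuous_id.mul continuous_const).tendsto 0
    simpa using h.mono_left nhdsWithin_le_nhds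
  · filter_upwards [self_mem_nhdsWithin] with ε (hε : 0 < ε)
    exact mul_pos hε hr

/-- Scaling lemma: if `φ ε / ε ^ k → a` as `ε → 0⁺`, `φ 0 = 0`, `1 ≤ k`, `0 ≤ r`, then
`φ (ε * r) / ε ^ k → a * r ^ k`. -/
private lemma tendsto_scale_pow {φ : ℝ → ℝ} {a : ℝ} {k : ℕ} (hk : 1 ≤ k) (h0 : φ 0 = 0)
    (h : Tendsto (fun ε : ℝ => φ ε / ε ^ k) (𝓝[>] 0) (𝓝 a)) {r : ℝ} (hr : 0 ≤ r) :
    Tendsto (fun ε : ℝ => φ (ε * r) / ε ^ k) (𝓝[>] 0) (𝓝 (a * r ^ k)) := by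
  rcases eq_or_lt_of_le hr with hr0 | hr0
  · have heq : (fun ε : ℝ => φ (ε * r) / ε ^ k) = fun _ : ℝ => (0 : ℝ) := by
      funext ε
      rw [← hr0, mul_zero, h0, zero_div]
    rw [heq, ← hr0, zero_pow (by omega : k ≠ 0), mul_zero]
    exact tendsto_const_nhds
  · have h1 : Tendsto (fun ε : ℝ => φ (ε * r) / (ε * r) ^ k) (𝓝[>] 0) (𝓝 a) :=
      h.comp (tendsto_mul_right_nhdsGT hr0)
    have h2 := h1.mul_const (r ^ k)
    apply h2.congr'
    filter_upwards [self_mem_nhdsWithin] with ε (hε : 0 < ε)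
    have hεk : (ε : ℝ) ^ k ≠ 0 := pow_ne_zero _ (ne_of_gt hε)
    have hrk : (r : ℝ) ^ k ≠ 0 := pow_ne_zero _ (ne_of_gt hr0)
    field_simp [mul_pow]
    ring

/-- If `φ` is monotone, nonnegative at `0`, and `φ ε / ε ^ k → a` with `k ≥ 1`,
then `φ 0 = 0`. -/
private lemma eval_zero_of_tendsto {φ : ℝ → ℝ} {a : ℝ} {k : ℕ} (hk : 1 ≤ k)
    (hmono : Monotone φ) (h0 : 0 ≤ φ 0)
    (h : Tendsto (fun ε : ℝ => φ ε / ε ^ k) (𝓝[>] 0) (𝓝 a)) : φ 0 = 0 := by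
  have hpow : Tendsto (fun ε : ℝ => ε ^ k) (𝓝[>] 0) (𝓝 0) := by
    have h1 : Tendsto (fun ε : ℝ => ε ^ k) (𝓝 0) (𝓝 ((0 : ℝ) ^ k)) :=
      (continuous_pow k).tendsto 0
    rw [zero_pow (by omega : k ≠ 0)] at h1
    exact h1.mono_left nhdsWithin_le_nhds
  have h2 : Tendsto (fun ε : ℝ => φ ε) (𝓝[>] 0) (𝓝 0) := by
    have h3 := h.mul hpow
    rw [mul_zero] at h3
    apply h3.congr'
    filter_upwards [self_mem_nhdsWithin] with ε (hε : 0 < ε)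
    field_simp
  have hle : φ 0 ≤ 0 := by
    apply ge_of_tendsto h2
    filter_upwards [self_mem_nhdsWithin] with ε (hε : 0 < ε)
    exact hmono hε.le
  linarith

/-- Bounds for differences of powers: for `0 ≤ y ≤ x`,
`(m+1) y^m (x-y) ≤ x^(m+1) - y^(m+1) ≤ (m+1) x^m (x-y)`. -/
private lemma pow_succ_sub_bounds {x y : ℝ} (hy : 0 ≤ y) (hxy : y ≤ x) (m : ℕ) :
    ((m : ℝ) + 1) * y ^ m * (x - y) ≤ x ^ (m + 1) - y ^ (m + 1) ∧
    x ^ (m + 1) - y ^ (m + 1) ≤ ((m : ℝ) + 1) * x ^ m * (x - y) := by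
  have hx : 0 ≤ x := hy.trans hxy
  have key : (∑ i ∈ Finset.range (m + 1), x ^ i * y ^ (m - i)) * (x - y)
      = x ^ (m + 1) - y ^ (m + 1) := by
    simpa using geom_sum₂_mul x y (m + 1)
  have hterm_lo : ∀ i ∈ Finset.range (m + 1), y ^ m ≤ x ^ i * y ^ (m - i) := by
    intro i hi
    have hi' : i ≤ m := Nat.lt_succ_iff.mp (Finset.mem_range.mp hi)
    calc y ^ m = y ^ i * y ^ (m - i) := by
          rw [← pow_add, Nat.add_sub_cancel' hi']
      _ ≤ x ^ i * y ^ (m - i) :=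
          mul_le_mul_of_nonneg_right (pow_le_pow_left₀ hy hxy i) (pow_nonneg hy _)
  have hterm_hi : ∀ i ∈ Finset.range (m + 1), x ^ i * y ^ (m - i) ≤ x ^ m := by
    intro i hi
    have hi' : i ≤ m := Nat.lt_succ_iff.mp (Finset.mem_range.mp hi)
    calc x ^ i * y ^ (m - i) ≤ x ^ i * x ^ (m - i) :=
          mul_le_mul_of_nonneg_left (pow_le_pow_left₀ hy hxy _) (pow_nonneg hx _)
      _ = x ^ m := by rw [← pow_add, Nat.add_sub_cancel' hi']
  have hsum_lo : ((m : ℝ) + 1) * y ^ m ≤ ∑ i ∈ Finset.range (m + 1), x ^ i * y ^ (m - i) := by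
    calc ((m : ℝ) + 1) * y ^ m = ∑ _i ∈ Finset.range (m + 1), y ^ m := by
          rw [Finset.sum_const, Finset.card_range, nsmul_eq_mul]; push_cast; ring
      _ ≤ _ := Finset.sum_le_sum hterm_lo
  have hsum_hi : (∑ i ∈ Finset.range (m + 1), x ^ i * y ^ (m - i)) ≤ ((m : ℝ) + 1) * x ^ m := by
    calc (∑ i ∈ Finset.range (m + 1), x ^ i * y ^ (m - i))
        ≤ ∑ _i ∈ Finset.range (m + 1), x ^ m := Finset.sum_le_sum hterm_hi
      _ = ((m : ℝ) + 1) * x ^ m := by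
          rw [Finset.sum_const, Finset.card_range, nsmul_eq_mul]; push_cast; ring
  have hxy' : 0 ≤ x - y := sub_nonneg.mpr hxy
  exact ⟨key ▸ mul_le_mul_of_nonneg_right hsum_lo hxy',
    key ▸ mul_le_mul_of_nonneg_right hsum_hi hxy'⟩

variable {Ω : Type*} [MeasurableSpace Ω]

/-- Monotonicity of `x ↦ P {f ≤ x}` in the reals. -/
private lemma cdf_mono (P : Measure Ω) [IsProbabilityMeasure P] {f : Ω → ℝ} :
    Monotone (fun x => (P {ω | f ω ≤ x}).toReal) := by
  intro x y hxy
  exact ENNReal.toReal_mono (measure_ne_top P _)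
    (measure_mono (fun ω (h : f ω ≤ x) => le_trans h hxy))

/-- Small ball behavior of a positive multiple. -/
private lemma smallBall_single (P : Measure Ω) [IsProbabilityMeasure P]
    (f : Ω → ℝ) {νa ca : ℝ} (hca : 0 < ca)
    (hlim : Tendsto (fun ε : ℝ => (P {ω | f ω ≤ ε}).toReal / ε) (𝓝[>] 0) (𝓝 νa)) :
    Tendsto (fun ε : ℝ => (P {ω | ca * f ω ≤ ε}).toReal / ε) (𝓝[>] 0) (𝓝 (νa / ca)) := by
  have hlim' : Tendsto (fun ε : ℝ => (P {ω | f ω ≤ ε}).toReal / ε ^ 1) (𝓝[>] 0) (𝓝 νa) := by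
    simpa [pow_one] using hlim
  have h0 : (P {ω | f ω ≤ (0 : ℝ)}).toReal = 0 :=
    eval_zero_of_tendsto le_rfl (cdf_mono P) ENNReal.toReal_nonneg hlim'
  have hscale := tendsto_scale_pow le_rfl h0 hlim' (le_of_lt (by positivity : (0:ℝ) < 1 / ca))
  have hset : ∀ ε : ℝ, {ω | ca * f ω ≤ ε} = {ω | f ω ≤ ε * (1 / ca)} := by
    intro ε
    ext ω
    simp only [Set.mem_setOf_eq, mul_one_div, le_div_iff₀ hca, mul_comm]
  have h1 : Tendsto (fun ε : ℝ => (P {ω | ca * f ω ≤ ε}).toReal / ε ^ 1) (𝓝[>] 0)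
      (𝓝 (νa * (1 / ca) ^ 1)) := by
    simpa only [hset] using hscale
  simpa [pow_one, mul_one_div, div_eq_mul_inv] using h1

/-- The key convolution step: if `S, W ≥ 0` are independent with
`P(S ≤ ε)/ε^m → a` (`m ≥ 1`) and `P(W ≤ ε)/ε → ν`, then
`P(S + W ≤ ε)/ε^(m+1) → a·ν/(m+1)`. -/
private lemma smallBall_step (P : Measure Ω) [IsProbabilityMeasure P]
    (S W : Ω → ℝ) (hSmeas : Measurable S) (hWmeas : Measurable W)
    (hS0 : ∀ ω, 0 ≤ S ω) (hind : IndepFun S W P)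
    (m : ℕ) (hm : 1 ≤ m) (a ν : ℝ)
    (hSlim : Tendsto (fun ε : ℝ => (P {ω | S ω ≤ ε}).toReal / ε ^ m) (𝓝[>] 0) (𝓝 a))
    (hWlim : Tendsto (fun ε : ℝ => (P {ω | W ω ≤ ε}).toReal / ε) (𝓝[>] 0) (𝓝 ν)) :
    Tendsto (fun ε : ℝ => (P {ω | S ω + W ω ≤ ε}).toReal / ε ^ (m + 1)) (𝓝[>] 0)
      (𝓝 (a * ν / ((m : ℝ) + 1))) := by
  classical
  set F : ℝ → ℝ := fun x => (P {ω | S ω ≤ x}).toReal with hF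
  set G : ℝ → ℝ := fun x => (P {ω | W ω ≤ x}).toReal with hG
  have hFmono : Monotone F := cdf_mono P
  have hGmono : Monotone G := cdf_mono P
  have hFnonneg : ∀ x, 0 ≤ F x := fun x => ENNReal.toReal_nonneg
  have hGnonneg : ∀ x, 0 ≤ G x := fun x => ENNReal.toReal_nonneg
  have hSlim' : Tendsto (fun ε : ℝ => F ε / ε ^ m) (𝓝[>] 0) (𝓝 a) := hSlim
  have hWlim' : Tendsto (fun ε : ℝ => G ε / ε ^ 1) (𝓝[>] 0) (𝓝 ν) := by
    simpa [pow_one] using hWlim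
  have hF0 : F 0 = 0 := eval_zero_of_tendsto hm hFmono (hFnonneg 0) hSlim'
  have hG0 : G 0 = 0 := eval_zero_of_tendsto le_rfl hGmono (hGnonneg 0) hWlim'
  have ha : 0 ≤ a := by
    apply ge_of_tendsto hSlim'
    filter_upwards [self_mem_nhdsWithin] with ε (hε : 0 < ε)
    exact div_nonneg (hFnonneg ε) (pow_nonneg hε.le m)
  have hν : 0 ≤ ν := by
    apply ge_of_tendsto hWlim'
    filter_upwards [self_mem_nhdsWithin] with ε (hε : 0 < ε)
    exact div_nonneg (hGnonneg ε) (pow_nonneg hε.le 1)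
  -- P(W ≤ 0) = 0
  have hW0zero : P {ω | W ω ≤ 0} = 0 := by
    rcases (ENNReal.toReal_eq_zero_iff (P {ω | W ω ≤ 0})).mp hG0 with h0 | htop
    · exact h0
    · exact absurd htop (measure_ne_top P _)
  -- measure of Ioc-type events for W, as a difference of G values
  have hGdiff : ∀ u v : ℝ, u ≤ v →
      (P (W ⁻¹' Set.Ioc u v)).toReal = G v - G u := by
    intro u v huv
    have hdisj : Disjoint (W ⁻¹' Set.Iic u) (W ⁻¹' Set.Ioc u v) :=
      (Set.Iic_disjoint_Ioc le_rfl).preimage W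
    have hunion : W ⁻¹' Set.Iic u ∪ W ⁻¹' Set.Ioc u v = W ⁻¹' Set.Iic v := by
      rw [← Set.preimage_union, Set.Iic_union_Ioc_eq_Iic huv]
    have hmeaseq : P (W ⁻¹' Set.Iic u) + P (W ⁻¹' Set.Ioc u v) = P (W ⁻¹' Set.Iic v) := by
      rw [← measure_union hdisj (hWmeas measurableSet_Ioc), hunion]
    have h2 := congrArg ENNReal.toReal hmeaseq
    rw [ENNReal.toReal_add (measure_ne_top P _) (measure_ne_top P _)] at h2
    have hGu : G u = (P (W ⁻¹' Set.Iic u)).toReal := rfl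
    have hGv : G v = (P (W ⁻¹' Set.Iic v)).toReal := rfl
    rw [hGu, hGv]
    linarith
  -- Sandwich bounds for fixed n ≥ 1 and ε > 0
  have upper : ∀ n : ℕ, 1 ≤ n → ∀ ε : ℝ, 0 < ε →
      (P {ω | S ω + W ω ≤ ε}).toReal ≤
        ∑ k ∈ Finset.range n,
          F (ε * (1 - (k : ℝ) / n)) * (G (ε * (((k : ℝ) + 1) / n)) - G (ε * ((k : ℝ) / n))) := by
    intro n hn ε hε
    have hn0 : (0 : ℝ) < n := by exact_mod_cast hn
    set A : ℕ → Set Ω := fun k =>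
      S ⁻¹' Set.Iic (ε * (1 - (k : ℝ) / n)) ∩
        W ⁻¹' Set.Ioc (ε * ((k : ℝ) / n)) (ε * (((k : ℝ) + 1) / n)) with hA
    have hincl : {ω | S ω + W ω ≤ ε} ⊆ {ω | W ω ≤ 0} ∪ ⋃ k ∈ Finset.range n, A k := by
      intro ω hω
      simp only [Set.mem_setOf_eq] at hω
      by_cases hW0 : W ω ≤ 0
      · exact Or.inl hW0
      push_neg at hW0
      right
      have hWle : W ω ≤ ε := by have := hS0 ω; linarith
      set t : ℝ := W ω * n / ε with ht
      have ht0 : 0 < t := by positivity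
      have htn : t ≤ n := by
        rw [ht, div_le_iff₀ hε]
        nlinarith
      set k : ℕ := ⌈t⌉₊ - 1 with hk
      have hceil1 : 1 ≤ ⌈t⌉₊ := Nat.one_le_ceil_iff.mpr ht0
      have hkk : k + 1 = ⌈t⌉₊ := by omega
      have hkn : k < n := by
        have h5 : ⌈t⌉₊ ≤ n := Nat.ceil_le.mpr (by exact_mod_cast htn)
        omega
      have hkt : (k : ℝ) < t := by
        have h1 : (⌈t⌉₊ : ℝ) < t + 1 := Nat.ceil_lt_add_one ht0.le
        have h2 : ((k : ℕ) : ℝ) = (⌈t⌉₊ : ℝ) - 1 := by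
          have h3 := congrArg (fun x : ℕ => (x : ℝ)) hkk
          push_cast at h3
          linarith
        linarith
      have htk1 : t ≤ (k : ℝ) + 1 := by
        have h1 := Nat.le_ceil t
        rw [← hkk] at h1
        exact_mod_cast h1
      have hWeq : W ω = t * (ε / n) := by
        rw [ht]; field_simp
      have hW_lo : ε * ((k : ℝ) / n) < W ω := by
        rw [hWeq]
        have h1 := mul_lt_mul_of_pos_right hkt (div_pos hε hn0)
        calc ε * ((k : ℝ) / n) = (k : ℝ) * (ε / n) := by ring
          _ < t * (ε / n) := h1
      have hW_hi : W ω ≤ ε * (((k : ℝ) + 1) / n) := by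
        rw [hWeq]
        have h1 := mul_le_mul_of_nonneg_right htk1 (div_pos hε hn0).le
        calc t * (ε / n) ≤ ((k : ℝ) + 1) * (ε / n) := h1
          _ = ε * (((k : ℝ) + 1) / n) := by ring
      have hS_le : S ω ≤ ε * (1 - (k : ℝ) / n) := by
        have h1 : S ω ≤ ε - W ω := by linarith
        have h2 : ε * (1 - (k : ℝ) / n) = ε - ε * ((k : ℝ) / n) := by ring
        linarith
      exact Set.mem_biUnion (Finset.mem_range.mpr hkn) ⟨hS_le, hW_lo, hW_hi⟩
    have hsum_ne : ∀ k ∈ Finset.range n, P (A k) ≠ ⊤ := fun _ _ => measure_ne_top P _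
    have hle : P {ω | S ω + W ω ≤ ε} ≤ ∑ k ∈ Finset.range n, P (A k) := by
      calc P {ω | S ω + W ω ≤ ε}
          ≤ P ({ω | W ω ≤ 0} ∪ ⋃ k ∈ Finset.range n, A k) := measure_mono hincl
        _ ≤ P {ω | W ω ≤ 0} + P (⋃ k ∈ Finset.range n, A k) := measure_union_le _ _
        _ = P (⋃ k ∈ Finset.range n, A k) := by rw [hW0zero, zero_add]
        _ ≤ ∑ k ∈ Finset.range n, P (A k) := measure_biUnion_finset_le _ _
    have h1 : (P {ω | S ω + W ω ≤ ε}).toReal ≤ (∑ k ∈ Finset.range n, P (A k)).toReal :=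
      ENNReal.toReal_mono (ENNReal.sum_ne_top.mpr hsum_ne) hle
    rw [ENNReal.toReal_sum hsum_ne] at h1
    refine h1.trans (le_of_eq (Finset.sum_congr rfl fun k hk => ?_))
    have huv : ε * ((k : ℝ) / n) ≤ ε * (((k : ℝ) + 1) / n) := by
      apply mul_le_mul_of_nonneg_left _ hε.le
      exact (div_le_div_iff_of_pos_right hn0).mpr (by linarith)
    rw [hA]
    rw [hind.measure_inter_preimage_eq_mul _ _ measurableSet_Iic measurableSet_Ioc,
      ENNReal.toReal_mul, hGdiff _ _ huv]
    rfl
  have lower : ∀ n : ℕ, 1 ≤ n → ∀ ε : ℝ, 0 < ε →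
      (∑ k ∈ Finset.range n,
          F (ε * (1 - ((k : ℝ) + 1) / n)) *
            (G (ε * (((k : ℝ) + 1) / n)) - G (ε * ((k : ℝ) / n)))) ≤
        (P {ω | S ω + W ω ≤ ε}).toReal := by
    intro n hn ε hε
    have hn0 : (0 : ℝ) < n := by exact_mod_cast hn
    set C : ℕ → Set Ω := fun k =>
      S ⁻¹' Set.Iic (ε * (1 - ((k : ℝ) + 1) / n)) ∩
        W ⁻¹' Set.Ioc (ε * ((k : ℝ) / n)) (ε * (((k : ℝ) + 1) / n)) with hC
    have hCmeas : ∀ k ∈ Finset.range n, MeasurableSet (C k) :=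
      fun k _ => (hSmeas measurableSet_Iic).inter (hWmeas measurableSet_Ioc)
    have hmono' : ∀ i j : ℕ, i < j →
        ε * (((i : ℝ) + 1) / n) ≤ ε * ((j : ℝ) / n) := by
      intro i j hij
      apply mul_le_mul_of_nonneg_left _ hε.le
      apply (div_le_div_iff_of_pos_right hn0).mpr
      exact_mod_cast Nat.succ_le_of_lt hij
    have hCdisj : Set.PairwiseDisjoint (↑(Finset.range n)) C := by
      intro i _ j _ hij
      have hWdisj : Disjoint (W ⁻¹' Set.Ioc (ε * ((i : ℝ) / n)) (ε * (((i : ℝ) + 1) / n)))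
          (W ⁻¹' Set.Ioc (ε * ((j : ℝ) / n)) (ε * (((j : ℝ) + 1) / n))) := by
        apply Disjoint.preimage
        rw [Set.Ioc_disjoint_Ioc]
        rcases lt_or_gt_of_ne hij with h | h
        · exact le_trans (min_le_left _ _) (le_trans (hmono' i j h) (le_max_right _ _))
        · exact le_trans (min_le_right _ _) (le_trans (hmono' j i h) (le_max_left _ _))
      exact Disjoint.mono Set.inter_subset_right Set.inter_subset_right hWdisj
    have hsub : (⋃ k ∈ Finset.range n, C k) ⊆ {ω | S ω + W ω ≤ ε} := by
      intro ω hω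
      rcases Set.mem_iUnion₂.mp hω with ⟨k, hk, hS_le, _, hW_hi⟩
      simp only [Set.mem_setOf_eq]
      have h2 : ε * (1 - ((k : ℝ) + 1) / n) + ε * (((k : ℝ) + 1) / n) = ε := by ring
      have hS' : S ω ≤ ε * (1 - ((k : ℝ) + 1) / n) := hS_le
      have hW' : W ω ≤ ε * (((k : ℝ) + 1) / n) := hW_hi
      linarith
    have hmeq : P (⋃ k ∈ Finset.range n, C k) = ∑ k ∈ Finset.range n, P (C k) :=
      measure_biUnion_finset hCdisj hCmeas
    have hle : ∑ k ∈ Finset.range n, P (C k) ≤ P {ω | S ω + W ω ≤ ε} := by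
      rw [← hmeq]; exact measure_mono hsub
    have h1 : (∑ k ∈ Finset.range n, P (C k)).toReal ≤ (P {ω | S ω + W ω ≤ ε}).toReal :=
      ENNReal.toReal_mono (measure_ne_top P _) hle
    rw [ENNReal.toReal_sum (fun _ _ => measure_ne_top P _)] at h1
    refine le_trans (le_of_eq (Finset.sum_congr rfl fun k hk => ?_)) h1
    have huv : ε * ((k : ℝ) / n) ≤ ε * (((k : ℝ) + 1) / n) := by
      apply mul_le_mul_of_nonneg_left _ hε.le
      exact (div_le_div_iff_of_pos_right hn0).mpr (by linarith)
    rw [hC]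
    rw [hind.measure_inter_preimage_eq_mul _ _ measurableSet_Iic measurableSet_Ioc,
      ENNReal.toReal_mul, hGdiff _ _ huv]
    rfl
  -- limits of the bounding sums for fixed n
  have tends_up : ∀ n : ℕ, 1 ≤ n →
      Tendsto (fun ε : ℝ =>
          (∑ k ∈ Finset.range n,
            F (ε * (1 - (k : ℝ) / n)) *
              (G (ε * (((k : ℝ) + 1) / n)) - G (ε * ((k : ℝ) / n)))) / ε ^ (m + 1))
        (𝓝[>] 0)
        (𝓝 (∑ k ∈ Finset.range n, a * (1 - (k : ℝ) / n) ^ m * (ν / n))) := by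
    intro n hn
    have hn0 : (0 : ℝ) < n := by exact_mod_cast hn
    have hterm : ∀ k ∈ Finset.range n,
        Tendsto (fun ε : ℝ =>
            F (ε * (1 - (k : ℝ) / n)) *
              (G (ε * (((k : ℝ) + 1) / n)) - G (ε * ((k : ℝ) / n))) / ε ^ (m + 1))
          (𝓝[>] 0) (𝓝 (a * (1 - (k : ℝ) / n) ^ m * (ν / n))) := by
      intro k hk
      have hk' : (k : ℝ) < n := by exact_mod_cast Finset.mem_range.mp hk
      have hr1 : 0 ≤ 1 - (k : ℝ) / n := by
        rw [sub_nonneg]; exact (div_le_one hn0).mpr hk'.le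
      have hFk := tendsto_scale_pow hm hF0 hSlim' hr1
      have hGk1 := tendsto_scale_pow le_rfl hG0 hWlim'
        (show (0 : ℝ) ≤ ((k : ℝ) + 1) / n by positivity)
      have hGk0 := tendsto_scale_pow le_rfl hG0 hWlim'
        (show (0 : ℝ) ≤ (k : ℝ) / n by positivity)
      have hmul := hFk.mul (hGk1.sub hGk0)
      have hlimeq : a * (1 - (k : ℝ) / n) ^ m * (ν * (((k : ℝ) + 1) / n) ^ 1 -
          ν * ((k : ℝ) / n) ^ 1) = a * (1 - (k : ℝ) / n) ^ m * (ν / n) := by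
        rw [pow_one, pow_one]
        congr 1
        field_simp
        ring
      rw [hlimeq] at hmul
      apply hmul.congr'
      filter_upwards [self_mem_nhdsWithin] with ε (hε : 0 < ε)
      rw [pow_one, div_sub_div_same, div_mul_div_comm, ← pow_succ]
    have hsum := tendsto_finset_sum (Finset.range n) hterm
    apply hsum.congr'
    filter_upwards [self_mem_nhdsWithin] with ε (hε : 0 < ε)
    rw [Finset.sum_div]
  have tends_lo : ∀ n : ℕ, 1 ≤ n →
      Tendsto (fun ε : ℝ =>
          (∑ k ∈ Finset.range n,
            F (ε * (1 - ((k : ℝ) + 1) / n)) *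
              (G (ε * (((k : ℝ) + 1) / n)) - G (ε * ((k : ℝ) / n)))) / ε ^ (m + 1))
        (𝓝[>] 0)
        (𝓝 (∑ k ∈ Finset.range n, a * (1 - ((k : ℝ) + 1) / n) ^ m * (ν / n))) := by
    intro n hn
    have hn0 : (0 : ℝ) < n := by exact_mod_cast hn
    have hterm : ∀ k ∈ Finset.range n,
        Tendsto (fun ε : ℝ =>
            F (ε * (1 - ((k : ℝ) + 1) / n)) *
              (G (ε * (((k : ℝ) + 1) / n)) - G (ε * ((k : ℝ) / n))) / ε ^ (m + 1))
          (𝓝[>] 0) (𝓝 (a * (1 - ((k : ℝ) + 1) / n) ^ m * (ν / n))) := by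
      intro k hk
      have hk' : (k : ℝ) + 1 ≤ n := by
        exact_mod_cast Nat.succ_le_of_lt (Finset.mem_range.mp hk)
      have hr1 : 0 ≤ 1 - ((k : ℝ) + 1) / n := by
        rw [sub_nonneg]; exact (div_le_one hn0).mpr hk'
      have hFk := tendsto_scale_pow hm hF0 hSlim' hr1
      have hGk1 := tendsto_scale_pow le_rfl hG0 hWlim'
        (show (0 : ℝ) ≤ ((k : ℝ) + 1) / n by positivity)
      have hGk0 := tendsto_scale_pow le_rfl hG0 hWlim'
        (show (0 : ℝ) ≤ (k : ℝ) / n by positivity)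
      have hmul := hFk.mul (hGk1.sub hGk0)
      have hlimeq : a * (1 - ((k : ℝ) + 1) / n) ^ m * (ν * (((k : ℝ) + 1) / n) ^ 1 -
          ν * ((k : ℝ) / n) ^ 1) = a * (1 - ((k : ℝ) + 1) / n) ^ m * (ν / n) := by
        rw [pow_one, pow_one]
        congr 1
        field_simp
        ring
      rw [hlimeq] at hmul
      apply hmul.congr'
      filter_upwards [self_mem_nhdsWithin] with ε (hε : 0 < ε)
      rw [pow_one, div_sub_div_same, div_mul_div_comm, ← pow_succ]
    have hsum := tendsto_finset_sum (Finset.range n) hterm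
    apply hsum.congr'
    filter_upwards [self_mem_nhdsWithin] with ε (hε : 0 < ε)
    rw [Finset.sum_div]
  -- properties of the limit constants
  have hconsts : ∀ n : ℕ, 1 ≤ n →
      (∑ k ∈ Finset.range n, a * (1 - ((k : ℝ) + 1) / n) ^ m * (ν / n)) ≤
          a * ν / ((m : ℝ) + 1) ∧
      a * ν / ((m : ℝ) + 1) ≤
          (∑ k ∈ Finset.range n, a * (1 - (k : ℝ) / n) ^ m * (ν / n)) ∧
      (∑ k ∈ Finset.range n, a * (1 - (k : ℝ) / n) ^ m * (ν / n)) -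
          (∑ k ∈ Finset.range n, a * (1 - ((k : ℝ) + 1) / n) ^ m * (ν / n)) =
          a * ν * (1 / n) := by
    intro n hn
    have hn0 : (0 : ℝ) < n := by exact_mod_cast hn
    have hyk : ∀ k ∈ Finset.range n, (0 : ℝ) ≤ 1 - ((k : ℝ) + 1) / n ∧
        1 - ((k : ℝ) + 1) / n ≤ 1 - (k : ℝ) / n ∧
        (1 - (k : ℝ) / n) - (1 - ((k : ℝ) + 1) / n) = 1 / n := by
      intro k hk
      have hk' : (k : ℝ) + 1 ≤ n := by
        exact_mod_cast Nat.succ_le_of_lt (Finset.mem_range.mp hk)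
      refine ⟨by rw [sub_nonneg]; exact (div_le_one hn0).mpr hk', ?_, by field_simp; ring⟩
      have h1 : (k : ℝ) / n ≤ ((k : ℝ) + 1) / n := (div_le_div_iff_of_pos_right hn0).mpr (by linarith)
      linarith
    -- telescoping sums
    have tel1 : ∑ k ∈ Finset.range n,
        ((1 - (k : ℝ) / n) ^ (m + 1) - (1 - ((k : ℝ) + 1) / n) ^ (m + 1)) = 1 := by
      have h := Finset.sum_range_sub' (fun k : ℕ => (1 - (k : ℝ) / n) ^ (m + 1)) n
      push_cast at h
      rw [div_self hn0.ne', zero_div, sub_zero, one_pow, sub_self,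
        zero_pow (Nat.succ_ne_zero m), sub_zero] at h
      exact h
    have tel2 : ∑ k ∈ Finset.range n,
        ((1 - (k : ℝ) / n) ^ m - (1 - ((k : ℝ) + 1) / n) ^ m) = 1 := by
      have h := Finset.sum_range_sub' (fun k : ℕ => (1 - (k : ℝ) / n) ^ m) n
      push_cast at h
      rw [div_self hn0.ne', zero_div, sub_zero, one_pow, sub_self,
        zero_pow (by omega : m ≠ 0), sub_zero] at h
      exact h
    have low_sum : ∑ k ∈ Finset.range n,
        ((m : ℝ) + 1) * (1 - ((k : ℝ) + 1) / n) ^ m * (1 / n) ≤ 1 := by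
      calc ∑ k ∈ Finset.range n, ((m : ℝ) + 1) * (1 - ((k : ℝ) + 1) / n) ^ m * (1 / n)
          ≤ ∑ k ∈ Finset.range n,
            ((1 - (k : ℝ) / n) ^ (m + 1) - (1 - ((k : ℝ) + 1) / n) ^ (m + 1)) := by
            apply Finset.sum_le_sum
            intro k hk
            obtain ⟨hy0, hyx, hd⟩ := hyk k hk
            have hb := (pow_succ_sub_bounds hy0 hyx m).1
            rw [hd] at hb
            exact hb
        _ = 1 := tel1
    have hi_sum : (1 : ℝ) ≤ ∑ k ∈ Finset.range n,
        ((m : ℝ) + 1) * (1 - (k : ℝ) / n) ^ m * (1 / n) := by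
      calc (1 : ℝ)
          = ∑ k ∈ Finset.range n,
            ((1 - (k : ℝ) / n) ^ (m + 1) - (1 - ((k : ℝ) + 1) / n) ^ (m + 1)) := tel1.symm
        _ ≤ ∑ k ∈ Finset.range n, ((m : ℝ) + 1) * (1 - (k : ℝ) / n) ^ m * (1 / n) := by
            apply Finset.sum_le_sum
            intro k hk
            obtain ⟨hy0, hyx, hd⟩ := hyk k hk
            have hb := (pow_succ_sub_bounds hy0 hyx m).2
            rw [hd] at hb
            exact hb
    have hm1 : (0 : ℝ) < (m : ℝ) + 1 := by positivity
    have hfac : (0 : ℝ) ≤ a * ν / ((m : ℝ) + 1) := by positivity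
    constructor
    · have heq : (∑ k ∈ Finset.range n, a * (1 - ((k : ℝ) + 1) / n) ^ m * (ν / n)) =
          (a * ν / ((m : ℝ) + 1)) *
            ∑ k ∈ Finset.range n, ((m : ℝ) + 1) * (1 - ((k : ℝ) + 1) / n) ^ m * (1 / n) := by
        rw [Finset.mul_sum]
        apply Finset.sum_congr rfl
        intro k _
        field_simp
      rw [heq]
      calc (a * ν / ((m : ℝ) + 1)) *
            ∑ k ∈ Finset.range n, ((m : ℝ) + 1) * (1 - ((k : ℝ) + 1) / n) ^ m * (1 / n)
          ≤ (a * ν / ((m : ℝ) + 1)) * 1 := mul_le_mul_of_nonneg_left low_sum hfac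
        _ = a * ν / ((m : ℝ) + 1) := mul_one _
    constructor
    · have heq : (∑ k ∈ Finset.range n, a * (1 - (k : ℝ) / n) ^ m * (ν / n)) =
          (a * ν / ((m : ℝ) + 1)) *
            ∑ k ∈ Finset.range n, ((m : ℝ) + 1) * (1 - (k : ℝ) / n) ^ m * (1 / n) := by
        rw [Finset.mul_sum]
        apply Finset.sum_congr rfl
        intro k _
        field_simp
      rw [heq]
      calc a * ν / ((m : ℝ) + 1) = (a * ν / ((m : ℝ) + 1)) * 1 := (mul_one _).symm
        _ ≤ (a * ν / ((m : ℝ) + 1)) *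
            ∑ k ∈ Finset.range n, ((m : ℝ) + 1) * (1 - (k : ℝ) / n) ^ m * (1 / n) :=
          mul_le_mul_of_nonneg_left hi_sum hfac
    · rw [← Finset.sum_sub_distrib]
      have heq : ∀ k ∈ Finset.range n,
          a * (1 - (k : ℝ) / n) ^ m * (ν / n) - a * (1 - ((k : ℝ) + 1) / n) ^ m * (ν / n) =
            (a * ν * (1 / n)) * ((1 - (k : ℝ) / n) ^ m - (1 - ((k : ℝ) + 1) / n) ^ m) := by
        intro k _
        ring
      rw [Finset.sum_congr rfl heq, ← Finset.mul_sum, tel2, mul_one]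
  -- final ε-δ argument
  rw [Metric.tendsto_nhds]
  intro δ hδ
  obtain ⟨n, hngt⟩ := exists_nat_gt (max 1 (a * ν / (δ / 2)))
  have hn1 : 1 ≤ n := by
    have h1 : (1 : ℝ) ≤ n := le_trans (le_max_left _ _) hngt.le
    exact_mod_cast h1
  have hn0 : (0 : ℝ) < n := by exact_mod_cast hn1
  have hclose : a * ν * (1 / n) < δ / 2 := by
    have h1 : a * ν / (δ / 2) < n := lt_of_le_of_lt (le_max_right _ _) hngt
    rw [div_lt_iff₀ (half_pos hδ)] at h1
    rw [mul_one_div, div_lt_iff₀ hn0]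
    linarith
  obtain ⟨hl_le, hu_ge, hdiff⟩ := hconsts n hn1
  have hu_ev := (Metric.tendsto_nhds.mp (tends_up n hn1)) (δ / 2) (half_pos hδ)
  have hl_ev := (Metric.tendsto_nhds.mp (tends_lo n hn1)) (δ / 2) (half_pos hδ)
  filter_upwards [hu_ev, hl_ev, self_mem_nhdsWithin] with ε hu hl (hε : 0 < ε)
  rw [Real.dist_eq] at hu hl ⊢
  rw [abs_lt] at hu hl ⊢
  have hεp : (0 : ℝ) < ε ^ (m + 1) := pow_pos hε _
  have hup := upper n hn1 ε hε
  have hlo := lower n hn1 ε hε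
  have hH_up : (P {ω | S ω + W ω ≤ ε}).toReal / ε ^ (m + 1) ≤
      (∑ k ∈ Finset.range n,
        F (ε * (1 - (k : ℝ) / n)) *
          (G (ε * (((k : ℝ) + 1) / n)) - G (ε * ((k : ℝ) / n)))) / ε ^ (m + 1) :=
    (div_le_div_iff_of_pos_right hεp).mpr hup
  have hH_lo : (∑ k ∈ Finset.range n,
        F (ε * (1 - ((k : ℝ) + 1) / n)) *
          (G (ε * (((k : ℝ) + 1) / n)) - G (ε * ((k : ℝ) / n)))) / ε ^ (m + 1) ≤
      (P {ω | S ω + W ω ≤ ε}).toReal / ε ^ (m + 1) :=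
    (div_le_div_iff_of_pos_right hεp).mpr hlo
  constructor
  · linarith [hl.1, hl_le, hdiff]
  · linarith [hu.2, hu_ge, hdiff]

end Aux

/-- **Small deviations of a positive linear combination of independent random variables
with linear small ball behavior.**
If `V₁, …, V_m` are independent nonnegative random variables with
`P(V_j ≤ ε)/ε → ν_j` as `ε → 0+`, and `c_j > 0`, then
`P(Σ c_j V_j ≤ ε)/ε^m → (1/m!) Π (ν_j/c_j)` as `ε → 0+`. -/
theorem smallBall_sum_of_indep {Ω : Type*} [MeasurableSpace Ω] (P : Measure Ω)
    [IsProbabilityMeasure P] (m : ℕ) (hm : 1 ≤ m) (V : Fin m → Ω → ℝ)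
    (hVmeas : ∀ j, Measurable (V j)) (hVnonneg : ∀ j, ∀ ω, 0 ≤ V j ω)
    (hVindep : iIndepFun V P)
    (c ν : Fin m → ℝ) (hc : ∀ j, 0 < c j) (hν : ∀ j, 0 < ν j)
    (hV : ∀ j, Tendsto (fun ε : ℝ => (P {ω | V j ω ≤ ε}).toReal / ε) (𝓝[>] 0) (𝓝 (ν j))) :
    Tendsto (fun ε : ℝ => (P {ω | (∑ j, c j * V j ω) ≤ ε}).toReal / ε ^ m) (𝓝[>] 0)
      (𝓝 ((1 / (Nat.factorial m : ℝ)) * ∏ j, ν j / c j)) := by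
  classical
  -- the scaled family is independent
  have hg : iIndepFun (fun j => fun ω => c j * V j ω) P :=
    hVindep.comp (fun j (x : ℝ) => c j * x) (fun j => measurable_const_mul (c j))
  have hgmeas : ∀ j, Measurable (fun ω => c j * V j ω) :=
    fun j => (hVmeas j).const_mul (c j)
  have key : ∀ (s : Finset (Fin m)) (hs : s.Nonempty),
      Tendsto (fun ε : ℝ => (P {ω | (∑ j ∈ s, c j * V j ω) ≤ ε}).toReal / ε ^ s.card)
        (𝓝[>] 0) (𝓝 ((1 / (Nat.factorial s.card : ℝ)) * ∏ j ∈ s, ν j / c j)) := by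
    intro s hs
    induction hs using Finset.Nonempty.cons_induction with
    | singleton a =>
      have h1 := smallBall_single P (V a) (hc a) (hV a)
      simp only [Finset.sum_singleton, Finset.card_singleton, Finset.prod_singleton,
        pow_one, Nat.factorial_one, Nat.cast_one, one_div, inv_one, one_mul]
      exact h1
    | cons a s ha hs ih =>
      have hcard : (Finset.cons a s ha).card = s.card + 1 := Finset.card_cons ha
      have hscard : 1 ≤ s.card := hs.card_pos
      -- the partial sum and the new term
      have hSmeas : Measurable (fun ω => ∑ j ∈ s, c j * V j ω) :=
        Finset.measurable_sum s (fun j _ => hgmeas j)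
      have hS0 : ∀ ω, 0 ≤ ∑ j ∈ s, c j * V j ω :=
        fun ω => Finset.sum_nonneg fun j _ => mul_nonneg (hc j).le (hVnonneg j ω)
      have hWmeas : Measurable (fun ω => c a * V a ω) := hgmeas a
      have hind : IndepFun (fun ω => ∑ j ∈ s, c j * V j ω) (fun ω => c a * V a ω) P := by
        have h := hg.indepFun_finsetSum_of_notMem hgmeas ha
        have hfun : (∑ j ∈ s, fun ω => c j * V j ω) = fun ω => ∑ j ∈ s, c j * V j ω := by
          funext ω
          simp [Finset.sum_apply]
        rwa [hfun] at h
      have hWlim := smallBall_single P (V a) (hc a) (hV a)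
      have hstep := smallBall_step P (fun ω => ∑ j ∈ s, c j * V j ω)
        (fun ω => c a * V a ω) hSmeas hWmeas hS0 hind s.card hscard _ _ ih hWlim
      have hset : ∀ ε : ℝ,
          {ω | (∑ j ∈ Finset.cons a s ha, c j * V j ω) ≤ ε} =
          {ω | (∑ j ∈ s, c j * V j ω) + c a * V a ω ≤ ε} := by
        intro ε
        ext ω
        simp only [Set.mem_setOf_eq, Finset.sum_cons]
        constructor <;> intro h <;> linarith
      have hconst : (1 / (Nat.factorial s.card : ℝ) * ∏ j ∈ s, ν j / c j) * (ν a / c a) /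
          ((s.card : ℝ) + 1) =
          1 / (Nat.factorial (Finset.cons a s ha).card : ℝ) *
            ∏ j ∈ Finset.cons a s ha, ν j / c j := by
        rw [hcard, Finset.prod_cons, Nat.factorial_succ]
        have h1 : (Nat.factorial s.card : ℝ) ≠ 0 :=
          Nat.cast_ne_zero.mpr (Nat.factorial_ne_zero _)
        have h2 : ((s.card : ℝ) + 1) ≠ 0 := by positivity
        push_cast
        field_simp
      have hgoal_eq : (fun ε : ℝ =>
          (P {ω | (∑ j ∈ Finset.cons a s ha, c j * V j ω) ≤ ε}).toReal /
            ε ^ (Finset.cons a s ha).card) =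
          (fun ε : ℝ =>
            (P {ω | (∑ j ∈ s, c j * V j ω) + c a * V a ω ≤ ε}).toReal / ε ^ (s.card + 1)) := by
        funext ε
        rw [hset ε, hcard]
      rw [hgoal_eq, ← hconst]
      exact hstep
  have hne : Nonempty (Fin m) := ⟨⟨0, hm⟩⟩
  have huniv := key Finset.univ Finset.univ_nonempty
  simpa [Finset.card_univ, Fintype.card_fin] using huniv
end
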